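/- arXiv:1407.0679 — 2 statements merged into one kernel-verified Lean document; each statement's English description precedes it below -/
import Mathlib

section
/- Relative Fatou theorem on the upper half-plane (absolutely continuous part): let η₁ and η₂ be finite Borel measures on ℝ with η₂ ≠ 0, and write the Lebesgue decomposition η₁ = f·η₂ + η_s where f is an η₂-integrable nonnegative function and η_s is a finite Borel measure singular with respect to η₂. Let h₁ and h₂ be the Poisson integrals of η₁ and η₂. Then for η₂-almost every x₀ ∈ ℝ and every aperture c > 0, h₁(z)/h₂(z) → f(x₀) as z → x₀ with z in the cone Γ_c(x₀). -/
open MeasureTheory Filter Topology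

/-- The Poisson kernel of the upper half-plane. -/
noncomputable def poissonKernelUHP (z : ℂ) (x : ℝ) : ℝ :=
  z.im / ((z.re - x) ^ 2 + z.im ^ 2)

/-- The Poisson integral of a measure on `ℝ`. -/
noncomputable def poissonIntegral (η : Measure ℝ) (z : ℂ) : ℝ :=
  ∫ x, poissonKernelUHP z x ∂η

/-- The nontangential cone of aperture `c` at `x₀`. -/
def cone (x₀ c : ℝ) : Set ℂ :=
  {z : ℂ | 0 < z.im ∧ |z.re - x₀| ≤ c * z.im}

/-!
At `η₂`-almost every `x₀`, Besicovitch differentiation gives three facts: `η_s(B(x₀, r))` is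
`o(η₂(B(x₀, r)))`, `x₀` is an `η₂`-Lebesgue point of `f`, and `2r ≤ K η₂(B(x₀, r))` for small `r`.
With `σ = |f - f x₀| • η₂ + η_s` the decomposition gives `|h₁ - f x₀ • h₂| ≤ h_σ`, and
`σ(B(x₀, r)) / η₂(B(x₀, r)) → 0`. In the cone `Γ_c(x₀)` the kernel `P(z, ·)` agrees up to the
factor `2 (1 + c²)` with the kernel at `x₀ + i Im z`, so it suffices to show `h_σ / h₂ → 0` along
the vertical ray. The superlevel sets of `P(x₀ + i t, ·)` are closed balls centred at `x₀`, so the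
layer-cake formula turns `σ(B(x₀, r)) ≤ ε η₂(B(x₀, r))` for `r ≤ δ` into
`h_σ(x₀ + i t) ≤ ε h₂(x₀ + i t) + σ(ℝ) t / δ²`, while the density bound keeps
`h₂(x₀ + i t) ≥ 1 / K`.
-/

open Set Metric
open scoped ENNReal

noncomputable def poissonLIntegral (μ : Measure ℝ) (z : ℂ) : ℝ≥0∞ :=
  ∫⁻ x, ENNReal.ofReal (poissonKernelUHP z x) ∂μ

section Kernel

variable {z w : ℂ}

lemma poissonKernelUHP_pos (hz : 0 < z.im) (x : ℝ) : 0 < poissonKernelUHP z x := by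
  unfold poissonKernelUHP; positivity

lemma poissonKernelUHP_le (hz : 0 < z.im) (x : ℝ) : poissonKernelUHP z x ≤ 1 / z.im := by
  unfold poissonKernelUHP
  rw [div_le_div_iff₀ (by positivity) hz]
  nlinarith [sq_nonneg (z.re - x)]

lemma norm_poissonKernelUHP_le (hz : 0 < z.im) (x : ℝ) :
    ‖poissonKernelUHP z x‖ ≤ 1 / z.im := by
  rw [Real.norm_of_nonneg (poissonKernelUHP_pos hz x).le]
  exact poissonKernelUHP_le hz x

lemma continuous_poissonKernelUHP (hz : 0 < z.im) : Continuous (poissonKernelUHP z) :=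
  continuous_const.div (by fun_prop) fun x => by positivity

lemma integrable_poissonKernelUHP (μ : Measure ℝ) [IsFiniteMeasure μ] (hz : 0 < z.im) :
    Integrable (poissonKernelUHP z) μ :=
  .of_bound (continuous_poissonKernelUHP hz).aestronglyMeasurable _
    (ae_of_all _ (norm_poissonKernelUHP_le hz))

lemma MeasureTheory.Integrable.mul_poissonKernelUHP {μ : Measure ℝ} {g : ℝ → ℝ}
    (hg : Integrable g μ) (hz : 0 < z.im) : Integrable (fun x => g x * poissonKernelUHP z x) μ :=
  hg.mul_bdd (continuous_poissonKernelUHP hz).aestronglyMeasurable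
    (ae_of_all _ (norm_poissonKernelUHP_le hz))

/-- Comparison of kernels at two points of the same height, from
`(x - a)² ≤ 2 (x - b)² + 2 (a - b)²`. -/
lemma poissonKernelUHP_le_mul_of_abs_sub_le {c : ℝ} (hz : 0 < z.im) (him : w.im = z.im)
    (hre : |z.re - w.re| ≤ c * z.im) (x : ℝ) :
    poissonKernelUHP z x ≤ 2 * (1 + c ^ 2) * poissonKernelUHP w x := by
  have hsq : (z.re - w.re) ^ 2 ≤ (c * z.im) ^ 2 := sq_le_sq' (abs_le.1 hre).1 (abs_le.1 hre).2
  unfold poissonKernelUHP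
  rw [him, mul_div_assoc', div_le_div_iff₀ (by positivity) (by positivity)]
  have key : (w.re - x) ^ 2 + z.im ^ 2 ≤ 2 * (1 + c ^ 2) * ((z.re - x) ^ 2 + z.im ^ 2) := by
    nlinarith [sq_nonneg (w.re - 2 * z.re + x), sq_nonneg (c * (z.re - x)), sq_nonneg z.im]
  nlinarith [mul_le_mul_of_nonneg_left key hz.le]

lemma setOf_le_poissonKernelUHP (hz : 0 < z.im) {s : ℝ} (hs : 0 < s) (hst : s ≤ 1 / z.im) :
    {x | s ≤ poissonKernelUHP z x} = closedBall z.re √(z.im / s - z.im ^ 2) := by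
  have hrad : 0 ≤ z.im / s - z.im ^ 2 := by
    rw [le_div_iff₀ hz, mul_comm] at hst
    rw [sub_nonneg, le_div_iff₀ hs]
    nlinarith
  ext x
  rw [mem_ofPred_eq, mem_closedBall, Real.dist_eq, Real.le_sqrt (abs_nonneg _) hrad, sq_abs,
    poissonKernelUHP, le_div_iff₀ (by positivity), le_sub_iff_add_le, le_div_iff₀ hs]
  constructor <;> intro h <;> nlinarith

end Kernel

section Poisson

variable {μ ν : Measure ℝ}

lemma poissonIntegral_eq_toReal {z : ℂ} (hz : 0 < z.im) :
    poissonIntegral μ z = (poissonLIntegral μ z).toReal :=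
  integral_eq_lintegral_of_nonneg_ae (ae_of_all _ fun x => (poissonKernelUHP_pos hz x).le)
    (continuous_poissonKernelUHP hz).aestronglyMeasurable

lemma poissonIntegral_pos [IsFiniteMeasure μ] (hμ : μ ≠ 0) {z : ℂ} (hz : 0 < z.im) :
    0 < poissonIntegral μ z := by
  rw [poissonIntegral,
    integral_pos_iff_support_of_nonneg (fun x => (poissonKernelUHP_pos hz x).le)
      (integrable_poissonKernelUHP μ hz),
    Function.support_eq_univ fun x => (poissonKernelUHP_pos hz x).ne']
  exact Measure.measure_univ_pos.2 hμ

lemma poissonIntegral_le_mul_of_abs_sub_le [IsFiniteMeasure μ] {z w : ℂ} {c : ℝ}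
    (hz : 0 < z.im) (him : w.im = z.im) (hre : |z.re - w.re| ≤ c * z.im) :
    poissonIntegral μ z ≤ 2 * (1 + c ^ 2) * poissonIntegral μ w := by
  rw [poissonIntegral, poissonIntegral, ← integral_const_mul]
  exact integral_mono (integrable_poissonKernelUHP μ hz)
    ((integrable_poissonKernelUHP μ (him ▸ hz)).const_mul _)
    (poissonKernelUHP_le_mul_of_abs_sub_le hz him hre)

lemma poissonIntegral_withDensity_add {d : ℝ → ℝ≥0∞} [IsFiniteMeasure (ν.withDensity d)]
    [IsFiniteMeasure μ] (hd : AEMeasurable d ν) (hd_top : ∀ᵐ x ∂ν, d x < ∞) {z : ℂ}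
    (hz : 0 < z.im) :
    poissonIntegral (ν.withDensity d + μ) z
      = ∫ x, (d x).toReal * poissonKernelUHP z x ∂ν + poissonIntegral μ z := by
  rw [poissonIntegral, integral_add_measure (integrable_poissonKernelUHP _ hz)
    (integrable_poissonKernelUHP _ hz), integral_withDensity_eq_integral_toReal_smul₀ hd hd_top]
  rfl

end Poisson

section LayerCake

variable {μ ν : Measure ℝ} {x₀ t δ : ℝ} {ε : ℝ≥0∞}

/-- At the level `s = 1 / t` the superlevel set is `{x₀}`, a ball of radius `0`, to which `h` does
not apply. -/
lemma measure_setOf_le_poissonKernelUHP_le (ht : 0 < t) (hδ : 0 < δ)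
    (h : ∀ r ∈ Ioc 0 δ, μ (closedBall x₀ r) ≤ ε * ν (closedBall x₀ r)) {s : ℝ}
    (hs : t / (t ^ 2 + δ ^ 2) < s) (hst : s ≠ 1 / t) :
    μ {x | s ≤ poissonKernelUHP ⟨x₀, t⟩ x} ≤ ε * ν {x | s ≤ poissonKernelUHP ⟨x₀, t⟩ x} := by
  have hs_pos : 0 < s := lt_trans (by positivity) hs
  rcases hst.lt_or_gt with hst | hst
  · rw [setOf_le_poissonKernelUHP (z := ⟨x₀, t⟩) ht hs_pos hst.le]
    rw [lt_div_iff₀ ht] at hst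
    rw [div_lt_iff₀ (by positivity)] at hs
    refine h _ ⟨Real.sqrt_pos.2 ?_, (Real.sqrt_le_left hδ.le).2 ?_⟩
    · rw [sub_pos, lt_div_iff₀ hs_pos]; nlinarith
    · rw [sub_le_iff_le_add, div_le_iff₀ hs_pos]; nlinarith
  · have hempty : {x | s ≤ poissonKernelUHP ⟨x₀, t⟩ x} = ∅ :=
      eq_empty_of_forall_notMem fun x hx => (poissonKernelUHP_le (z := ⟨x₀, t⟩) ht x).not_gt
        (hst.trans_le hx)
    simp [hempty]

/-- Layer-cake form of the ball comparison: the superlevel sets of the kernel are closed balls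
centred at `x₀`, of radius at most `δ` above the level `t / (t² + δ²) ≤ t / δ²`. -/
lemma poissonLIntegral_le_of_measure_closedBall_le (ht : 0 < t) (hδ : 0 < δ)
    (h : ∀ r ∈ Ioc 0 δ, μ (closedBall x₀ r) ≤ ε * ν (closedBall x₀ r)) :
    poissonLIntegral μ ⟨x₀, t⟩
      ≤ ε * poissonLIntegral ν ⟨x₀, t⟩ + μ univ * ENNReal.ofReal (t / δ ^ 2) := by
  set z : ℂ := ⟨x₀, t⟩
  set s₀ := t / (t ^ 2 + δ ^ 2)
  have hP := continuous_poissonKernelUHP (z := z) ht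
  have hP_nonneg {ρ : Measure ℝ} : 0 ≤ᵐ[ρ] poissonKernelUHP z :=
    ae_of_all _ fun x => (poissonKernelUHP_pos ht x).le
  have hmeas : Measurable fun s => ν {x | s ≤ poissonKernelUHP z x} :=
    Antitone.measurable fun _ _ hab => measure_mono fun _ hx => hab.trans hx
  have hbound : ∀ᵐ s ∂volume.restrict (Ioi 0), μ {x | s ≤ poissonKernelUHP z x}
      ≤ ε * ν {x | s ≤ poissonKernelUHP z x} + (Ioc 0 s₀).indicator (fun _ => μ univ) s := by
    filter_upwards [ae_restrict_of_ae (Measure.ae_ne volume (1 / t)),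
      ae_restrict_mem measurableSet_Ioi] with s hst (hs : 0 < s)
    by_cases hle : s ≤ s₀
    · rw [indicator_of_mem (show s ∈ Ioc 0 s₀ from ⟨hs, hle⟩)]
      exact le_add_left (measure_mono (subset_univ _))
    · exact le_add_right (measure_setOf_le_poissonKernelUHP_le ht hδ h (not_le.1 hle) hst)
  have hvol : volume.restrict (Ioi 0) (Ioc 0 s₀) ≤ ENNReal.ofReal (t / δ ^ 2) := by
    refine (Measure.restrict_apply_le _ _).trans ?_
    rw [Real.volume_Ioc, sub_zero]
    exact ENNReal.ofReal_le_ofReal (div_le_div_of_nonneg_left ht.le (by positivity) (by nlinarith))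
  calc poissonLIntegral μ z = ∫⁻ s in Ioi 0, μ {x | s ≤ poissonKernelUHP z x} :=
        lintegral_eq_lintegral_meas_le μ hP_nonneg hP.aemeasurable
    _ ≤ ∫⁻ s in Ioi 0, (ε * ν {x | s ≤ poissonKernelUHP z x}
          + (Ioc 0 s₀).indicator (fun _ => μ univ) s) := lintegral_mono_ae hbound
    _ = ε * poissonLIntegral ν z + μ univ * volume.restrict (Ioi 0) (Ioc 0 s₀) := by
        rw [lintegral_add_left (hmeas.const_mul ε), lintegral_const_mul _ hmeas,
          lintegral_indicator_const measurableSet_Ioc, poissonLIntegral,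
          lintegral_eq_lintegral_meas_le ν hP_nonneg hP.aemeasurable]
    _ ≤ ε * poissonLIntegral ν z + μ univ * ENNReal.ofReal (t / δ ^ 2) := by gcongr

lemma one_le_mul_poissonLIntegral {z : ℂ} {K : ℝ≥0∞} (hz : 0 < z.im)
    (hK : volume (closedBall z.re z.im) ≤ K * ν (closedBall z.re z.im)) :
    1 ≤ K * poissonLIntegral ν z := by
  set B := closedBall z.re z.im
  have hball : ∀ x ∈ B,
      ENNReal.ofReal (1 / (2 * z.im)) ≤ ENNReal.ofReal (poissonKernelUHP z x) := by
    intro x hx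
    rw [mem_closedBall, Real.dist_eq, abs_sub_comm] at hx
    have hsq : (z.re - x) ^ 2 ≤ z.im ^ 2 := sq_le_sq' (abs_le.1 hx).1 (abs_le.1 hx).2
    refine ENNReal.ofReal_le_ofReal ?_
    rw [poissonKernelUHP, div_le_div_iff₀ (by positivity) (by positivity)]
    nlinarith
  have hB : ENNReal.ofReal (1 / (2 * z.im)) * ν B ≤ poissonLIntegral ν z :=
    calc ENNReal.ofReal (1 / (2 * z.im)) * ν B = ∫⁻ _ in B, ENNReal.ofReal (1 / (2 * z.im)) ∂ν := by
          rw [setLIntegral_const, mul_comm]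
      _ ≤ ∫⁻ x in B, ENNReal.ofReal (poissonKernelUHP z x) ∂ν :=
          setLIntegral_mono (ENNReal.measurable_ofReal.comp
            (continuous_poissonKernelUHP hz).measurable) hball
      _ ≤ poissonLIntegral ν z := setLIntegral_le_lintegral _ _
  rw [Real.volume_closedBall] at hK
  calc (1 : ℝ≥0∞) = ENNReal.ofReal (1 / (2 * z.im)) * ENNReal.ofReal (2 * z.im) := by
        rw [← ENNReal.ofReal_mul (by positivity), one_div, inv_mul_cancel₀ (by positivity),
          ENNReal.ofReal_one]
    _ ≤ ENNReal.ofReal (1 / (2 * z.im)) * (K * ν B) := by gcongr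
    _ = K * (ENNReal.ofReal (1 / (2 * z.im)) * ν B) := by ring
    _ ≤ K * poissonLIntegral ν z := by gcongr

end LayerCake

section Vertical

variable {μ ν : Measure ℝ} [IsFiniteMeasure μ] [IsLocallyFiniteMeasure ν] {x₀ : ℝ} {K : ℝ≥0∞}

theorem tendsto_poissonLIntegral_div (hK : K ≠ ∞)
    (hν : ∀ᶠ r in 𝓝[>] 0, volume (closedBall x₀ r) ≤ K * ν (closedBall x₀ r))
    (hμν : Tendsto (fun r => μ (closedBall x₀ r) / ν (closedBall x₀ r)) (𝓝[>] 0) (𝓝 0)) :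
    Tendsto (fun t : ℝ => poissonLIntegral μ ⟨x₀, t⟩ / poissonLIntegral ν ⟨x₀, t⟩)
      (𝓝[>] 0) (𝓝 0) := by
  refine ENNReal.tendsto_nhds_zero.2 fun ε hε => ?_
  have hε₂ : 0 < ε / 2 := ENNReal.half_pos hε.ne'
  obtain ⟨δ, hδ, hball⟩ : ∃ δ ∈ Ioi (0 : ℝ),
      Ioc 0 δ ⊆ {r | μ (closedBall x₀ r) ≤ ε / 2 * ν (closedBall x₀ r)} := by
    refine mem_nhdsGT_iff_exists_Ioc_subset.1 ?_
    filter_upwards [hμν.eventually_le_const hε₂, hν, self_mem_nhdsWithin] with r hr hrν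
      (hr₀ : 0 < r)
    have hν₀ : ν (closedBall x₀ r) ≠ 0 := fun h₀ => by
      simp [h₀, Real.volume_closedBall] at hrν
      linarith
    exact (ENNReal.div_le_iff hν₀ measure_closedBall_lt_top.ne).1 hr
  have htail : Tendsto (fun t => μ univ * ENNReal.ofReal (t / δ ^ 2) * K) (𝓝[>] 0) (𝓝 0) := by
    have h := ((ENNReal.continuous_ofReal.comp (continuous_id.div_const (δ ^ 2))).tendsto 0)
      |>.mono_left (nhdsWithin_le_nhds (s := Ioi 0))
    simpa using ENNReal.Tendsto.mul_const (ENNReal.Tendsto.const_mul h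
      (Or.inr (measure_ne_top μ univ))) (Or.inr hK)
  filter_upwards [htail.eventually_le_const hε₂, hν, self_mem_nhdsWithin] with t htε htν
    (ht : 0 < t)
  set B := poissonLIntegral ν ⟨x₀, t⟩
  set X := μ univ * ENNReal.ofReal (t / δ ^ 2)
  have hXB : X / B ≤ X * K := ENNReal.div_le_of_le_mul <|
    calc X = X * 1 := (mul_one X).symm
      _ ≤ X * (K * B) := by gcongr; exact one_le_mul_poissonLIntegral ht htν
      _ = X * K * B := (mul_assoc _ _ _).symm
  calc poissonLIntegral μ ⟨x₀, t⟩ / B ≤ (ε / 2 * B + X) / B :=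
        ENNReal.div_le_div_right (poissonLIntegral_le_of_measure_closedBall_le ht hδ hball) _
    _ = ε / 2 * B / B + X / B := ENNReal.add_div
    _ ≤ ε / 2 + ε / 2 := add_le_add
        ((mul_div_assoc _ _ _).trans_le (mul_le_of_le_one_right' ENNReal.div_self_le_one))
        (hXB.trans htε)
    _ = ε := ENNReal.add_halves ε

theorem tendsto_poissonIntegral_div (hK : K ≠ ∞)
    (hν : ∀ᶠ r in 𝓝[>] 0, volume (closedBall x₀ r) ≤ K * ν (closedBall x₀ r))
    (hμν : Tendsto (fun r => μ (closedBall x₀ r) / ν (closedBall x₀ r)) (𝓝[>] 0) (𝓝 0)) :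
    Tendsto (fun t : ℝ => poissonIntegral μ ⟨x₀, t⟩ / poissonIntegral ν ⟨x₀, t⟩)
      (𝓝[>] 0) (𝓝 0) := by
  have h := (ENNReal.tendsto_toReal ENNReal.zero_ne_top).comp
    (tendsto_poissonLIntegral_div hK hν hμν)
  rw [ENNReal.toReal_zero] at h
  refine h.congr' ?_
  filter_upwards [self_mem_nhdsWithin] with t (ht : 0 < t)
  simp only [Function.comp_apply, ENNReal.toReal_div, poissonIntegral_eq_toReal (z := ⟨x₀, t⟩) ht]

end Vertical

lemma tendsto_im_nhdsWithin_cone (x₀ c : ℝ) :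
    Tendsto Complex.im (𝓝[cone x₀ c] (x₀ : ℂ)) (𝓝[>] 0) := by
  have h := Complex.continuous_im.continuousWithinAt.tendsto_nhdsWithin (x := (x₀ : ℂ))
    (t := Ioi 0) fun z (hz : z ∈ cone x₀ c) => hz.1
  rwa [Complex.ofReal_im] at h

section Differentiation

variable {β : Type*} [MetricSpace β] [MeasurableSpace β] [BorelSpace β] [SecondCountableTopology β]
  [HasBesicovitchCovering β] {μ ν : Measure β} [IsLocallyFiniteMeasure μ]
  [IsLocallyFiniteMeasure ν]

theorem MeasureTheory.Measure.MutuallySingular.ae_tendsto_measure_closedBall_div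
    (h : μ ⟂ₘ ν) :
    ∀ᵐ x ∂ν, Tendsto (fun r => μ (closedBall x r) / ν (closedBall x r)) (𝓝[>] 0) (𝓝 0) := by
  filter_upwards [Besicovitch.ae_tendsto_rnDeriv μ ν, h.rnDeriv_ae_eq_zero] with x hx h₀
  rwa [h₀] at hx

variable (μ ν) in
theorem ae_exists_measure_closedBall_le_mul :
    ∀ᵐ x ∂ν, ∃ K ≠ ∞, ∀ᶠ r in 𝓝[>] 0, μ (closedBall x r) ≤ K * ν (closedBall x r) := by
  filter_upwards [Besicovitch.ae_tendsto_rnDeriv μ ν, Measure.rnDeriv_lt_top μ ν] with x hx hlt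
  refine ⟨μ.rnDeriv ν x + 1, ENNReal.add_ne_top.2 ⟨hlt.ne, ENNReal.one_ne_top⟩, ?_⟩
  filter_upwards [hx.eventually_le_const (ENNReal.lt_add_right hlt.ne one_ne_zero)] with r hr
  exact (ENNReal.div_le_iff_le_mul (Or.inr (ENNReal.add_ne_top.2 ⟨hlt.ne, ENNReal.one_ne_top⟩))
    (Or.inr (by simp))).1 hr

theorem ae_tendsto_withDensity_enorm_sub_closedBall_div {E : Type*} [NormedAddCommGroup E]
    {f : β → E} (hf : LocallyIntegrable f ν) :
    ∀ᵐ x ∂ν, Tendsto (fun r => ν.withDensity (fun y => ‖f y - f x‖ₑ) (closedBall x r)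
      / ν (closedBall x r)) (𝓝[>] 0) (𝓝 0) := by
  filter_upwards [(Besicovitch.vitaliFamily ν).ae_tendsto_lintegral_enorm_sub_div hf] with x hx
  simpa only [Function.comp_def, withDensity_apply _ measurableSet_closedBall] using
    hx.comp (Besicovitch.tendsto_filterAt ν x)

end Differentiation

lemma MeasureTheory.Integrable.isFiniteMeasure_withDensity_enorm {α E : Type*} [MeasurableSpace α]
    [NormedAddCommGroup E] {μ : Measure α} {g : α → E} (hg : Integrable g μ) :
    IsFiniteMeasure (μ.withDensity fun x => ‖g x‖ₑ) :=
  isFiniteMeasure_withDensity hg.2.ne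

lemma abs_poissonIntegral_sub_mul_le {η₁ η₂ η_s : Measure ℝ} [IsFiniteMeasure η₂]
    [IsFiniteMeasure η_s] {f : ℝ → ℝ} (hf_nonneg : 0 ≤ f) (hf_int : Integrable f η₂)
    (hdec : η₁ = η₂.withDensity (fun x => ENNReal.ofReal (f x)) + η_s) (a : ℝ) {z : ℂ}
    (hz : 0 < z.im) :
    |poissonIntegral η₁ z - a * poissonIntegral η₂ z|
      ≤ poissonIntegral (η₂.withDensity (fun x => ‖f x - a‖ₑ) + η_s) z := by
  have hfa : Integrable (fun x => f x - a) η₂ := hf_int.sub (integrable_const a)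
  have := isFiniteMeasure_withDensity_ofReal hf_int.2
  have := hfa.isFiniteMeasure_withDensity_enorm
  have hP := integrable_poissonKernelUHP η₂ hz
  have hs_nonneg : 0 ≤ poissonIntegral η_s z :=
    integral_nonneg fun x => (poissonKernelUHP_pos hz x).le
  rw [hdec, poissonIntegral_withDensity_add hf_int.aemeasurable.ennreal_ofReal
      (ae_of_all _ fun _ => ENNReal.ofReal_lt_top) hz,
    poissonIntegral_withDensity_add hfa.aestronglyMeasurable.enorm
      (ae_of_all _ fun _ => enorm_lt_top) hz]
  simp only [ENNReal.toReal_ofReal (hf_nonneg _), toReal_enorm, Real.norm_eq_abs]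
  have hsplit : ∫ x, f x * poissonKernelUHP z x ∂η₂ + poissonIntegral η_s z
        - a * poissonIntegral η₂ z
      = ∫ x, (f x - a) * poissonKernelUHP z x ∂η₂ + poissonIntegral η_s z := by
    simp only [sub_mul, integral_sub (hf_int.mul_poissonKernelUHP hz) (hP.const_mul a),
      integral_const_mul, poissonIntegral]
    ring
  rw [hsplit]
  refine (abs_add_le _ _).trans (add_le_add ?_ (abs_of_nonneg hs_nonneg).le)
  refine abs_integral_le_integral_abs.trans_eq (integral_congr_ae (ae_of_all _ fun x => ?_))
  simp [abs_mul, abs_of_pos (poissonKernelUHP_pos hz x)]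

lemma abs_div_poissonIntegral_sub_le {ν ρ : Measure ℝ} [IsFiniteMeasure ν] [IsFiniteMeasure ρ]
    (hν : ν ≠ 0) {x₀ c a b : ℝ} {z : ℂ} (hz : z ∈ cone x₀ c)
    (hb : |b - a * poissonIntegral ν z| ≤ poissonIntegral ρ z) :
    |b / poissonIntegral ν z - a|
      ≤ (2 * (1 + c ^ 2)) ^ 2 * (poissonIntegral ρ ⟨x₀, z.im⟩ / poissonIntegral ν ⟨x₀, z.im⟩) := by
  obtain ⟨him, hre⟩ := hz
  set w : ℂ := ⟨x₀, z.im⟩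
  set C := 2 * (1 + c ^ 2)
  have hνz := poissonIntegral_pos hν him
  have hνw := poissonIntegral_pos hν (z := w) him
  have hρ : poissonIntegral ρ z ≤ C * poissonIntegral ρ w :=
    poissonIntegral_le_mul_of_abs_sub_le him rfl hre
  have hν' : poissonIntegral ν w ≤ C * poissonIntegral ν z :=
    poissonIntegral_le_mul_of_abs_sub_le (z := w) him rfl (by rwa [abs_sub_comm])
  have hdiv :
      b / poissonIntegral ν z - a = (b - a * poissonIntegral ν z) / poissonIntegral ν z := by
    field_simp
  calc |b / poissonIntegral ν z - a| = |b - a * poissonIntegral ν z| / poissonIntegral ν z := by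
        rw [hdiv, abs_div, abs_of_pos hνz]
    _ ≤ C * poissonIntegral ρ w / (poissonIntegral ν w / C) :=
        div_le_div₀ ((abs_nonneg _).trans (hb.trans hρ)) (hb.trans hρ) (by positivity)
          ((div_le_iff₀' (by positivity)).2 hν')
    _ = C ^ 2 * (poissonIntegral ρ w / poissonIntegral ν w) := by
        field_simp

theorem relative_fatou_ac
    (η₁ η₂ η_s : Measure ℝ) [IsFiniteMeasure η₁] [IsFiniteMeasure η₂] [IsFiniteMeasure η_s]
    (hη₂ : η₂ ≠ 0)
    (f : ℝ → ℝ) (hf_nonneg : 0 ≤ f) (hf_int : Integrable f η₂)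
    (hsing : η_s.MutuallySingular η₂)
    (hdec : η₁ = η₂.withDensity (fun x => ENNReal.ofReal (f x)) + η_s) :
    ∀ᵐ x₀ : ℝ ∂η₂, ∀ c > (0 : ℝ),
      Tendsto (fun z : ℂ => poissonIntegral η₁ z / poissonIntegral η₂ z)
        (𝓝[cone x₀ c] (x₀ : ℂ)) (𝓝 (f x₀)) := by
  filter_upwards [hsing.ae_tendsto_measure_closedBall_div,
    ae_tendsto_withDensity_enorm_sub_closedBall_div hf_int.locallyIntegrable,
    ae_exists_measure_closedBall_le_mul volume η₂] with x₀ hs hf hdensity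
  intro c _
  obtain ⟨K, hK, hvol⟩ := hdensity
  set σ := η₂.withDensity (fun x => ‖f x - f x₀‖ₑ) + η_s
  have := (hf_int.sub (integrable_const (f x₀))).isFiniteMeasure_withDensity_enorm
  have hσ : Tendsto (fun r => σ (closedBall x₀ r) / η₂ (closedBall x₀ r)) (𝓝[>] 0) (𝓝 0) := by
    simpa only [σ, Measure.add_apply, ENNReal.add_div, add_zero] using hf.add hs
  have hvert := ((tendsto_poissonIntegral_div hK hvol hσ).comp
    (tendsto_im_nhdsWithin_cone x₀ c)).const_mul ((2 * (1 + c ^ 2)) ^ 2)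
  rw [mul_zero] at hvert
  rw [tendsto_iff_norm_sub_tendsto_zero]
  refine squeeze_zero' (Eventually.of_forall fun _ => norm_nonneg _) ?_ hvert
  filter_upwards [self_mem_nhdsWithin] with z hz
  exact abs_div_poissonIntegral_sub_le hη₂ hz
    (abs_poissonIntegral_sub_mul_le hf_nonneg hf_int hdec (f x₀) hz.1)
end

section
/- Nontangential convergence of normalized Poisson integrals of continuous densities: let f : ℝ → [0,∞) be bounded, continuous, and Lebesgue-integrable. Then for every x₀ ∈ ℝ and every aperture c > 0, (1/π)·∫_ℝ P(z,x) f(x) dx → f(x₀) as z → x₀ with z in the cone Γ_c(x₀). -/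
open MeasureTheory Filter Topology Real

/-!
The substitution `x = Re z + Im z * t` rewrites `(1/π) ∫ P(z,x) f(x) dx` as the average of
`f (Re z + Im z * t)` against the Cauchy density `(1/π) (1 + t²)⁻¹`. As `z → x₀` the integrand
tends to `f x₀` pointwise by continuity, and it is dominated by `B (1 + t²)⁻¹`, so dominated
convergence gives the limit `f x₀`.
-/

/-- The Poisson kernel of the upper half-plane. -/
noncomputable def upperHalfPlanePoissonKernel (z : ℂ) (x : ℝ) : ℝ :=
  z.im / ((z.re - x) ^ 2 + z.im ^ 2)

variable {E : Type*} [NormedAddCommGroup E] [NormedSpace ℝ E]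

lemma upperHalfPlanePoissonKernel_eq_inv_mul {z : ℂ} (hz : 0 < z.im) (x : ℝ) :
    upperHalfPlanePoissonKernel z x = z.im⁻¹ * (1 + ((x - z.re) / z.im) ^ 2)⁻¹ := by
  unfold upperHalfPlanePoissonKernel
  field_simp
  ring

lemma integral_upperHalfPlanePoissonKernel_smul {z : ℂ} (hz : 0 < z.im) (g : ℝ → E) :
    ∫ x, upperHalfPlanePoissonKernel z x • g x = ∫ t, (1 + t ^ 2)⁻¹ • g (z.re + z.im * t) := by
  have hscale := Measure.integral_comp_mul_left
    (fun u => (1 + (u / z.im) ^ 2)⁻¹ • g (z.re + u)) z.im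
  have hshift := integral_add_left_eq_self (μ := volume)
    (fun x => (1 + ((x - z.re) / z.im) ^ 2)⁻¹ • g x) z.re
  simp only [mul_div_cancel_left₀ _ hz.ne', abs_inv, abs_of_pos hz] at hscale
  simp only [add_sub_cancel_left] at hshift
  rw [hscale, hshift, ← integral_smul]
  simp only [upperHalfPlanePoissonKernel_eq_inv_mul hz, smul_smul]

lemma tendsto_integral_inv_one_add_sq_smul_comp [CompleteSpace E] {g : ℝ → E}
    (hg : Continuous g) {B : ℝ} (hB : ∀ x, ‖g x‖ ≤ B) (x₀ : ℝ) :
    Tendsto (fun z : ℂ => ∫ t, (1 + t ^ 2)⁻¹ • g (z.re + z.im * t)) (𝓝 (x₀ : ℂ))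
      (𝓝 (π • g x₀)) := by
  rw [← integral_univ_inv_one_add_sq, ← integral_smul_const]
  refine tendsto_integral_filter_of_dominated_convergence (fun t => B * (1 + t ^ 2)⁻¹)
    (Eventually.of_forall fun z => ?_) (Eventually.of_forall fun z => ?_)
    (integrable_inv_one_add_sq.const_mul B) (Eventually.of_forall fun t => ?_)
  · fun_prop
  · refine Eventually.of_forall fun t => ?_
    rw [norm_smul, Real.norm_of_nonneg (by positivity), mul_comm]
    exact mul_le_mul_of_nonneg_right (hB _) (by positivity)
  · refine tendsto_const_nhds.smul ?_
    have : Continuous fun z : ℂ => g (z.re + z.im * t) := by fun_prop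
    simpa using this.tendsto (x₀ : ℂ)

theorem tendsto_integral_upperHalfPlanePoissonKernel_smul [CompleteSpace E] {g : ℝ → E}
    (hg : Continuous g) {B : ℝ} (hB : ∀ x, ‖g x‖ ≤ B) (x₀ : ℝ) :
    Tendsto (fun z : ℂ => (1 / π) • ∫ x, upperHalfPlanePoissonKernel z x • g x)
      (𝓝[{z | 0 < z.im}] (x₀ : ℂ)) (𝓝 (g x₀)) := by
  have hlim : Tendsto (fun z : ℂ => (1 / π) • ∫ t, (1 + t ^ 2)⁻¹ • g (z.re + z.im * t))
      (𝓝[{z | 0 < z.im}] (x₀ : ℂ)) (𝓝 ((1 / π) • π • g x₀)) :=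
    ((tendsto_integral_inv_one_add_sq_smul_comp hg hB x₀).const_smul _).mono_left
      nhdsWithin_le_nhds
  rw [smul_smul, one_div_mul_cancel pi_ne_zero, one_smul] at hlim
  refine hlim.congr' (eventually_nhdsWithin_of_forall fun z hz => ?_)
  exact congrArg _ (integral_upperHalfPlanePoissonKernel_smul hz g).symm

theorem nontangential_convergence_continuous_density_general
    (f : ℝ → ℝ) (hf_nonneg : 0 ≤ f) (hf_bdd : ∃ B : ℝ, ∀ x, f x ≤ B)
    (hf_cont : Continuous f) :
    ∀ (x₀ : ℝ), ∀ c > (0 : ℝ),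
      Tendsto (fun z : ℂ => (1 / π) * ∫ x, upperHalfPlanePoissonKernel z x * f x)
        (𝓝[cone x₀ c] (x₀ : ℂ)) (𝓝 (f x₀)) := by
  intro x₀ c _
  obtain ⟨B, hB⟩ := hf_bdd
  have hnorm : ∀ x, ‖f x‖ ≤ B := fun x => by
    rw [Real.norm_of_nonneg (hf_nonneg x)]
    exact hB x
  exact (tendsto_integral_upperHalfPlanePoissonKernel_smul hf_cont hnorm x₀).mono_left
    (nhdsWithin_mono _ fun z hz => hz.1)

theorem nontangential_convergence_continuous_density
    (f : ℝ → ℝ) (hf_nonneg : 0 ≤ f) (hf_bdd : ∃ B : ℝ, ∀ x, f x ≤ B)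
    (hf_cont : Continuous f) (hf_int : Integrable f) :
    ∀ (x₀ : ℝ), ∀ c > (0 : ℝ),
      Tendsto (fun z : ℂ => (1 / π) * ∫ x, upperHalfPlanePoissonKernel z x * f x)
        (𝓝[cone x₀ c] (x₀ : ℂ)) (𝓝 (f x₀)) :=
  nontangential_convergence_continuous_density_general f hf_nonneg hf_bdd hf_cont
end
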